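/- arXiv:1401.7964 — 4 statements merged into one kernel-verified Lean document; each statement's English description precedes it below -/
import Mathlib

section
/- A metric space X is of the first category (i.e., X is a countable union of subsets that are nowhere dense in X) if and only if X contains a dense subset which is σ-discrete in X, is a Gδ-set in X, and has no isolated points. -/
open Set Topology

/-- A subset `A` of a topological space `X` is σ-discrete (in `X`) if it is a countable
union of sets `A n` such that every point of `X` has a neighborhood containing at most
one point of `A n`. -/
def SigmaDiscrete {X : Type*} [TopologicalSpace X] (A : Set X) : Prop :=
  ∃ f : ℕ → Set X, A = ⋃ n, f n ∧
    ∀ n, ∀ x : X, ∃ U ∈ 𝓝 x, (U ∩ f n).Subsingleton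

/-! Write `X = ⋃ Cₙ` with `Cₙ` closed nowhere dense, and let `Aₙ` be a maximal
`εₙ`-separated subset of the layer `Cₙ \ ⋃_{k<n} C_k`, where `εₙ ↓ 0`. Each `Aₙ` is closed and
discrete. `D = ⋃ Aₙ` is dense because every point outside `C₀ ∪ ⋯ ∪ Cₘ` (a dense set) lies in a
later layer, hence within `εₘ` of `D`; and `D` is `Gδ` because its trace on each `Cₘ` is the
closed set `(A₀ ∪ ⋯ ∪ Aₘ) ∩ Cₘ`.
Conversely, the pieces of a σ-discrete set without isolated points are closed with empty
interior, so `D` is meagre; a dense `Gδ` has meagre complement, so `X = D ∪ Dᶜ` is meagre. -/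

open Filter Metric
open scoped ENNReal NNReal

section Topological

variable {X : Type*} [TopologicalSpace X]

lemma IsNowhereDense.union {s t : Set X} (hs : IsNowhereDense s) (ht : IsNowhereDense t) :
    IsNowhereDense (s ∪ t) := by
  rwa [IsNowhereDense, closure_union,
    interior_union_isClosed_of_interior_empty isClosed_closure ht]

lemma isNowhereDense_accumulate {f : ℕ → Set X} (hf : ∀ n, IsNowhereDense (f n)) (n : ℕ) :
    IsNowhereDense (accumulate f n) := by
  induction n with
  | zero => simpa only [accumulate_zero_nat] using hf 0
  | succ n ih => rw [accumulate_succ]; exact ih.union (hf _)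

lemma IsNowhereDense.nhdsNE_neBot {s : Set X} {x : X} (hs : IsNowhereDense s) (hx : x ∈ s) :
    NeBot (𝓝[≠] x) := by
  refine neBot_iff.2 fun hx_iso => ?_
  have hx_int : x ∈ interior (closure s) :=
    interior_maximal (singleton_subset_iff.2 (subset_closure hx))
      ((isOpen_singleton_iff_punctured_nhds x).2 hx_iso) rfl
  rwa [hs] at hx_int

lemma isGδ_of_forall_isClosed_inter [PerfectlyNormalSpace X] {ι : Type*} [Countable ι]
    {s : Set X} {C : ι → Set X} (hC : ∀ i, IsClosed (C i)) (hcov : ⋃ i, C i = univ)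
    (hs : ∀ i, IsClosed (s ∩ C i)) : IsGδ s := by
  have hs_eq : s = ⋂ i, (s ∩ C i) ∪ (C i)ᶜ := by
    ext x
    simp only [mem_iInter, mem_union, mem_inter_iff, mem_compl_iff]
    refine ⟨fun hx i => (em (x ∈ C i)).imp (⟨hx, ·⟩) id, fun h => ?_⟩
    obtain ⟨i, hi⟩ := mem_iUnion.1 (hcov ▸ mem_univ x)
    exact ((h i).resolve_right (not_not.2 hi)).1
  rw [hs_eq]
  exact .iInter fun i => (hs i).isGδ.union (hC i).isOpen_compl.isGδ

lemma isClosed_of_forall_exists_nhds_subsingleton [T1Space X] {s : Set X}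
    (hs : ∀ x, ∃ U ∈ 𝓝 x, (U ∩ s).Subsingleton) : IsClosed s := by
  refine isClosed_of_closure_subset fun x hx => ?_
  obtain ⟨U, hU, hUs⟩ := hs x
  obtain ⟨V, hVU, hV, hxV⟩ := mem_nhds_iff.1 hU
  have hVs : IsClosed (V ∩ s) := (hUs.anti (inter_subset_inter_left s hVU)).finite.isClosed
  exact (hVs.closure_subset (hV.inter_closure ⟨hxV, hx⟩)).2

lemma isNowhereDense_of_forall_exists_nhds_subsingleton [T1Space X] {s D : Set X}
    (hs : ∀ x, ∃ U ∈ 𝓝 x, (U ∩ s).Subsingleton) (hsD : s ⊆ D)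
    (hD : ∀ x ∈ D, x ∈ closure (D \ {x})) : IsNowhereDense s := by
  rw [(isClosed_of_forall_exists_nhds_subsingleton hs).isNowhereDense_iff,
    eq_empty_iff_forall_notMem]
  intro x hx
  obtain ⟨U, hU, hUs⟩ := hs x
  obtain ⟨y, ⟨hyU, hys⟩, -, hyx⟩ := mem_closure_iff_nhds.1 (hD x (hsD (interior_subset hx)))
    _ (inter_mem hU (isOpen_interior.mem_nhds hx))
  exact hyx (hUs ⟨hyU, interior_subset hys⟩ ⟨mem_of_mem_nhds hU, interior_subset hx⟩)

theorem SigmaDiscrete.isMeagre [T1Space X] {D : Set X} (hD : SigmaDiscrete D)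
    (hD_perfect : ∀ x ∈ D, x ∈ closure (D \ {x})) : IsMeagre D := by
  obtain ⟨g, rfl, hg⟩ := hD
  exact isMeagre_iUnion fun n =>
    (isNowhereDense_of_forall_exists_nhds_subsingleton (hg n) (subset_iUnion g n)
      hD_perfect).isMeagre

lemma isMeagre_univ_of_dense_of_isGδ {D : Set X} (hd : Dense D) (hG : IsGδ D)
    (hD : IsMeagre D) : IsMeagre (univ : Set X) := by
  rw [← union_compl_self D]
  refine hD.union ?_
  rw [IsMeagre, compl_compl]
  exact residual_of_dense_Gδ hG hd

lemma exists_nat_isNowhereDense_of_isMeagre_univ (h : IsMeagre (univ : Set X)) :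
    ∃ f : ℕ → Set X, (∀ n, IsNowhereDense (f n)) ∧ ⋃ n, f n = univ := by
  obtain ⟨S, hS, hS_count, hS_cov⟩ := isMeagre_iff_countable_union_isNowhereDense.1 h
  -- `∅` is added so that the family is nonempty and can be enumerated by `ℕ`.
  obtain ⟨f, hf⟩ := (hS_count.insert ∅).exists_eq_range (insert_nonempty _ _)
  refine ⟨f, fun n => ?_, eq_univ_of_univ_subset ?_⟩
  · rcases (hf ▸ mem_range_self n : f n ∈ insert ∅ S) with h | h
    · exact h ▸ isNowhereDense_empty
    · exact hS _ h
  · rw [← sUnion_range, ← hf]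
    exact hS_cov.trans (sUnion_mono (subset_insert _ _))

end Topological

lemma le_of_mem_disjointed_of_mem {α : Type*} {f : ℕ → Set α} {x : α} {m n : ℕ}
    (hn : x ∈ disjointed f n) (hm : x ∈ f m) : n ≤ m := by
  rw [disjointed_eq_inter_compl] at hn
  by_contra! hmn
  exact mem_iInter₂.1 hn.2 m hmn hm

section EMetric

variable {X : Type*}

lemma Metric.exists_isSeparated_isCover [PseudoEMetricSpace X] (ε : ℝ≥0) (s : Set X) :
    ∃ N ⊆ s, IsSeparated ε N ∧ IsCover ε s N := by
  obtain ⟨N, hN⟩ := zorn_subset {N | N ⊆ s ∧ IsSeparated ε N} fun c hc hchain =>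
    ⟨⋃₀ c, ⟨sUnion_subset fun t ht => (hc ht).1,
      hchain.pairwise_sUnion.2 fun t ht => (hc ht).2⟩, fun _ => subset_sUnion_of_mem⟩
  exact ⟨N, hN.prop.1, hN.prop.2, .of_maximal_isSeparated hN⟩

lemma Metric.IsSeparated.exists_nhds_subsingleton [PseudoEMetricSpace X] {ε : ℝ≥0∞}
    {s : Set X} (hε : ε ≠ 0) (hs : IsSeparated ε s) (x : X) :
    ∃ U ∈ 𝓝 x, (U ∩ s).Subsingleton := by
  refine ⟨eball x (ε / 2), eball_mem_nhds x (ENNReal.half_pos hε), fun a ha b hb => ?_⟩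
  by_contra hab
  have hab_close : edist a b < ε := calc
    edist a b ≤ edist a x + edist x b := edist_triangle a x b
    _ < ε / 2 + ε / 2 := ENNReal.add_lt_add (mem_eball.1 ha.1) (mem_eball'.1 hb.1)
    _ = ε := ENNReal.add_halves ε
  exact (hs ha.2 hb.2 hab).not_gt hab_close

lemma dense_of_forall_infEDist_le [PseudoEMetricSpace X] {s : Set X} {G : ℕ → Set X}
    {δ : ℕ → ℝ≥0∞} (hδ : Tendsto δ atTop (𝓝 0)) (hG : ∀ n, Dense (G n))
    (h : ∀ n, ∀ x ∈ G n, infEDist x s ≤ δ n) : Dense s := fun x =>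
  mem_closure_iff_infEDist_zero.2 <| nonpos_iff_eq_zero.1 <| ge_of_tendsto' hδ fun n =>
    closure_minimal (t := {x | infEDist x s ≤ δ n}) (h n)
      (isClosed_le continuous_infEDist continuous_const) (hG n x)

section Layers

variable [EMetricSpace X] {C A : ℕ → Set X}

lemma dense_iUnion_of_isCover_disjointed (hC : ∀ n, IsClosed (C n))
    (hC_nwd : ∀ n, IsNowhereDense (C n)) (hC_cov : ⋃ n, C n = univ) {ε : ℕ → ℝ≥0}
    (hε : Antitone ε) (hε_lim : Tendsto ε atTop (𝓝 0))
    (hA : ∀ n, IsCover (ε n) (disjointed C n) (A n)) : Dense (⋃ n, A n) := by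
  refine dense_of_forall_infEDist_le (G := fun m => (accumulate C m)ᶜ)
    (ENNReal.tendsto_coe.2 hε_lim) (fun m => ?_) fun m y hy => ?_
  · have hC_acc : IsClosed (accumulate C m) :=
      (finite_Iic m).isClosed_biUnion fun n _ => hC n
    exact (isClosed_isNowhereDense_iff_compl.1 ⟨hC_acc, isNowhereDense_accumulate hC_nwd m⟩).2
  · obtain ⟨n, hn⟩ := mem_iUnion.1 ((iUnion_disjointed.trans hC_cov).symm ▸ mem_univ y)
    have hmn : m ≤ n := by
      by_contra! hnm
      exact hy (mem_accumulate.2 ⟨n, hnm.le, disjointed_subset C n hn⟩)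
    obtain ⟨a, ha, hya⟩ := hA n hn
    calc infEDist y (⋃ n, A n)
      _ ≤ edist y a := infEDist_le_edist_of_mem (mem_iUnion_of_mem n ha)
      _ ≤ ε n := hya
      _ ≤ ε m := by exact_mod_cast hε hmn

lemma isGδ_iUnion_of_subset_disjointed (hC : ∀ n, IsClosed (C n)) (hC_cov : ⋃ n, C n = univ)
    (hA : ∀ n, IsClosed (A n)) (hAC : ∀ n, A n ⊆ disjointed C n) : IsGδ (⋃ n, A n) := by
  refine isGδ_of_forall_isClosed_inter hC hC_cov fun m => ?_
  have hA_eq : (⋃ n, A n) ∩ C m = accumulate A m ∩ C m := by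
    refine Subset.antisymm (fun x ⟨hx, hxm⟩ => ⟨?_, hxm⟩)
      (inter_subset_inter_left _ (accumulate_subset_iUnion m))
    obtain ⟨n, hn⟩ := mem_iUnion.1 hx
    exact mem_accumulate.2 ⟨n, le_of_mem_disjointed_of_mem (hAC n hn) hxm, hn⟩
  rw [hA_eq]
  exact ((finite_Iic m).isClosed_biUnion fun n _ => hA n).inter (hC m)

end Layers

theorem exists_dense_sigmaDiscrete_isGδ_of_iUnion_isNowhereDense [EMetricSpace X]
    {f : ℕ → Set X} (hf : ∀ n, IsNowhereDense (f n)) (hf_cov : ⋃ n, f n = univ) :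
    ∃ D : Set X, Dense D ∧ SigmaDiscrete D ∧ IsGδ D := by
  set C : ℕ → Set X := fun n => closure (f n)
  have hC : ∀ n, IsClosed (C n) := fun n => isClosed_closure
  have hC_cov : ⋃ n, C n = univ :=
    eq_univ_of_univ_subset (hf_cov ▸ iUnion_mono fun n => subset_closure)
  obtain ⟨ε, hε_anti, hε_pos, hε_lim⟩ := exists_seq_strictAnti_tendsto (0 : ℝ≥0)
  choose A hAC hA_sep hA_cov using fun n => exists_isSeparated_isCover (ε n) (disjointed C n)
  have hA_discrete : ∀ n x, ∃ U ∈ 𝓝 x, (U ∩ A n).Subsingleton := fun n =>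
    (hA_sep n).exists_nhds_subsingleton (ENNReal.coe_ne_zero.2 (hε_pos n).ne')
  refine ⟨⋃ n, A n, ?_, ⟨A, rfl, hA_discrete⟩, ?_⟩
  · exact dense_iUnion_of_isCover_disjointed hC (fun n => (hf n).closure) hC_cov
      hε_anti.antitone hε_lim hA_cov
  · exact isGδ_iUnion_of_subset_disjointed hC hC_cov
      (fun n => isClosed_of_forall_exists_nhds_subsingleton (hA_discrete n)) hAC

end EMetric

/-- A metric space `X` is of the first category (a countable union of sets nowhere dense
in `X`) iff `X` contains a dense subset which is σ-discrete in `X`, a `Gδ`-set in `X`,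
and has no isolated points. -/
theorem stmt_0 {X : Type*} [MetricSpace X] :
    (∃ f : ℕ → Set X, (∀ n, IsNowhereDense (f n)) ∧ (⋃ n, f n) = Set.univ) ↔
    (∃ D : Set X, Dense D ∧ SigmaDiscrete D ∧ IsGδ D ∧
      ∀ x ∈ D, x ∈ closure (D \ {x})) := by
  constructor
  · rintro ⟨f, hf, hf_cov⟩
    obtain ⟨D, hD, hD_sigma, hD_Gδ⟩ :=
      exists_dense_sigmaDiscrete_isGδ_of_iUnion_isNowhereDense hf hf_cov
    refine ⟨D, hD, hD_sigma, hD_Gδ, fun x _ => ?_⟩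
    obtain ⟨n, hxn⟩ := mem_iUnion.1 (hf_cov ▸ mem_univ x)
    have := (hf n).nhdsNE_neBot hxn
    exact hD.sdiff_singleton x x
  · rintro ⟨D, hD, hD_sigma, hD_Gδ, hD_perfect⟩
    exact exists_nat_isNowhereDense_of_isMeagre_univ
      (isMeagre_univ_of_dense_of_isGδ hD hD_Gδ (hD_sigma.isMeagre hD_perfect))
end

section
/- Every densely homogeneous metrizable space of the first category is a Λ-set; that is, if X is metrizable, X is a countable union of nowhere dense subsets, X has a dense σ-discrete subset, and for any two σ-discrete dense subsets A, B of X there is a homeomorphism h of X onto itself with h(A) = B, then every σ-discrete subset of X is a Gδ-set in X. -/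
open Set Topology

/-! A metrizable space of the first category is an increasing union of closed nowhere dense
sets `F n`. A maximal `1/(n+1)`-separated subset `N n` of each `(F n)ᶜ` is closed and discrete,
and `E = ⋃ n, N n` is dense; it is also `Gδ`, because it meets each `F n` only in the closed
set `N 0 ∪ ⋯ ∪ N n`. Given a σ-discrete `A`, dense homogeneity carries `E` onto the dense
σ-discrete set `E ∪ A`, which is therefore `Gδ`. Finally `A` is `E ∪ A` minus the σ-discrete set
`E \ A`, and the complement of a σ-discrete set is `Gδ` since its pieces are closed. -/

open scoped NNReal ENNReal

def IsLocallySubsingleton {X : Type*} [TopologicalSpace X] (S : Set X) : Prop :=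
  ∀ x : X, ∃ U ∈ 𝓝 x, (U ∩ S).Subsingleton

section Topological

variable {X : Type*} [TopologicalSpace X]

theorem IsLocallySubsingleton.isClosed [T1Space X] {S : Set X} (hS : IsLocallySubsingleton S) :
    IsClosed S := by
  have hfin : LocallyFinite fun a : S => ({a.1} : Set X) := fun x => by
    obtain ⟨U, hU, hsub⟩ := hS x
    refine ⟨U, hU, Subsingleton.finite fun a ha b hb => Subtype.ext (hsub ?_ ?_)⟩
    · obtain ⟨_, rfl, h⟩ := ha; exact ⟨h, a.2⟩
    · obtain ⟨_, rfl, h⟩ := hb; exact ⟨h, b.2⟩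
  simpa only [iUnion_of_singleton_coe] using hfin.isClosed_iUnion fun _ => isClosed_singleton

theorem SigmaDiscrete.mono {A B : Set X} (hA : SigmaDiscrete A) (hBA : B ⊆ A) :
    SigmaDiscrete B := by
  obtain ⟨f, rfl, hf⟩ := hA
  refine ⟨fun n => f n ∩ B, by rw [← iUnion_inter, inter_eq_right.2 hBA], fun n x => ?_⟩
  obtain ⟨U, hU, hsub⟩ := hf n x
  exact ⟨U, hU, hsub.anti (inter_subset_inter_right _ inter_subset_left)⟩

theorem SigmaDiscrete.union {A B : Set X} (hA : SigmaDiscrete A) (hB : SigmaDiscrete B) :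
    SigmaDiscrete (A ∪ B) := by
  obtain ⟨f, rfl, hf⟩ := hA
  obtain ⟨g, rfl, hg⟩ := hB
  have hfg : ∀ s, IsLocallySubsingleton (Sum.elim f g s) := Sum.forall.2 ⟨hf, hg⟩
  refine ⟨Sum.elim f g ∘ Equiv.natSumNatEquivNat.symm, ?_, fun n => hfg _⟩
  calc (⋃ n, f n) ∪ ⋃ n, g n = ⋃ s, Sum.elim f g s := (iUnion_sum (s := Sum.elim f g)).symm
    _ = ⋃ n, Sum.elim f g (Equiv.natSumNatEquivNat.symm n) := (Equiv.iSup_comp _).symm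

theorem SigmaDiscrete.isGδ_compl [T1Space X] {A : Set X} (hA : SigmaDiscrete A) : IsGδ Aᶜ := by
  obtain ⟨f, rfl, hf⟩ := hA
  rw [compl_iUnion]
  exact .iInter fun n => (IsLocallySubsingleton.isClosed (hf n)).isOpen_compl.isGδ

theorem IsGδ.diff_of_sigmaDiscrete [T1Space X] {A B : Set X} (hA : IsGδ A) (hB : SigmaDiscrete B) :
    IsGδ (A \ B) :=
  hA.inter hB.isGδ_compl

theorem isClosed_accumulate {s : ℕ → Set X} (hs : ∀ n, IsClosed (s n)) (n : ℕ) :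
    IsClosed (accumulate s n) := by
  rw [accumulate_def]
  exact (finite_le_nat n).isClosed_biUnion fun i _ => hs i

theorem dense_compl_accumulate {s : ℕ → Set X} (hs : ∀ n, IsClosed (s n)) (hd : ∀ n, Dense (s n)ᶜ)
    (n : ℕ) : Dense (accumulate s n)ᶜ := by
  induction n with
  | zero => simpa only [accumulate_zero_nat] using hd 0
  | succ n ih =>
    rw [accumulate_succ, compl_union]
    exact ih.inter_of_isOpen_left (hd _) (isClosed_accumulate hs n).isOpen_compl

theorem exists_monotone_isClosed_cover_of_isNowhereDense {f : ℕ → Set X}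
    (hf : ∀ n, IsNowhereDense (f n)) (hcover : ⋃ n, f n = univ) :
    ∃ F : ℕ → Set X, Monotone F ∧ (∀ n, IsClosed (F n)) ∧ (∀ n, Dense (F n)ᶜ) ∧
      ⋃ n, F n = univ := by
  have hclosed : ∀ n, IsClosed (closure (f n)) := fun _ => isClosed_closure
  refine ⟨accumulate fun n => closure (f n), monotone_accumulate, isClosed_accumulate hclosed,
    dense_compl_accumulate hclosed fun n =>
      (isClosed_isNowhereDense_iff_compl.1 ⟨hclosed n, (hf n).closure⟩).2, ?_⟩
  rw [iUnion_accumulate]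
  exact eq_univ_of_subset (iUnion_mono fun n => subset_closure) hcover

theorem isGδ_of_isClosed_inter [PerfectlyNormalSpace X] {ι : Type*} [Countable ι] {E : Set X}
    {F : ι → Set X} (hF : ∀ i, IsClosed (F i)) (hcover : ⋃ i, F i = univ)
    (hE : ∀ i, IsClosed (E ∩ F i)) : IsGδ E := by
  have : E = ⋂ i, (F i)ᶜ ∪ (E ∩ F i) := by
    ext x
    obtain ⟨i, hi⟩ := mem_iUnion.1 (hcover ▸ mem_univ x)
    simp only [mem_iInter, mem_union, mem_compl_iff, mem_inter_iff]
    exact ⟨fun hx j => (em (x ∈ F j)).symm.imp id (⟨hx, ·⟩),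
      fun h => ((h i).resolve_left (not_not.2 hi)).1⟩
  rw [this]
  exact .iInter fun i => (hF i).isOpen_compl.isGδ.union (hE i).isGδ

end Topological

section PseudoEMetric

variable {X : Type*} [PseudoEMetricSpace X]

theorem Metric.IsSeparated.isLocallySubsingleton {ε : ℝ≥0∞} (hε : ε ≠ 0) {S : Set X}
    (hS : Metric.IsSeparated ε S) : IsLocallySubsingleton S := by
  refine fun x => ⟨Metric.eball x (ε / 2), Metric.eball_mem_nhds x (by simpa using hε), ?_⟩
  rintro a ⟨ha, haS⟩ b ⟨hb, hbS⟩
  by_contra hab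
  refine (hS haS hbS hab).not_ge ?_
  calc edist a b ≤ edist a x + edist b x := edist_triangle_right a b x
    _ ≤ ε / 2 + ε / 2 := add_le_add (Metric.mem_eball.1 ha).le (Metric.mem_eball.1 hb).le
    _ = ε := ENNReal.add_halves ε

theorem Metric.exists_maximal_isSeparated (ε : ℝ≥0∞) (s : Set X) :
    ∃ N, Maximal (fun N => N ⊆ s ∧ Metric.IsSeparated ε N) N := by
  refine zorn_subset _ fun c hc hchain => ⟨⋃₀ c, ⟨sUnion_subset fun t ht => (hc ht).1, ?_⟩,
    fun t ht => subset_sUnion_of_mem ht⟩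
  exact hchain.pairwise_sUnion.2 fun t ht => (hc ht).2

theorem dense_iUnion_of_isCover {ι : Type*} {s N : ι → Set X}
    {ε : ι → ℝ≥0} (hs : ∀ i, Dense (s i)) (hN : ∀ i, Metric.IsCover (ε i) (s i) (N i))
    (hε : ∀ r : ℝ≥0∞, 0 < r → ∃ i, (ε i : ℝ≥0∞) < r) : Dense (⋃ i, N i) := by
  refine EMetric.dense_iff.2 fun x r hr => ?_
  have hr2 : 0 < r / 2 := ENNReal.half_pos hr.ne'
  obtain ⟨i, hi⟩ := hε _ hr2
  obtain ⟨y, hyx, hys⟩ := EMetric.dense_iff.1 (hs i) x _ hr2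
  obtain ⟨z, hzN, hyz⟩ := hN i hys
  refine ⟨z, ?_, mem_iUnion.2 ⟨i, hzN⟩⟩
  calc edist z x ≤ edist y z + edist y x := edist_triangle_left z x y
    _ < r / 2 + r / 2 := ENNReal.add_lt_add (lt_of_le_of_lt hyz hi) hyx
    _ = r := ENNReal.add_halves r

end PseudoEMetric

theorem exists_dense_sigmaDiscrete_isGδ {X : Type*} [EMetricSpace X] {F : ℕ → Set X}
    (hmono : Monotone F) (hclosed : ∀ n, IsClosed (F n)) (hdense : ∀ n, Dense (F n)ᶜ)
    (hcover : ⋃ n, F n = univ) :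
    ∃ E : Set X, Dense E ∧ SigmaDiscrete E ∧ IsGδ E := by
  set ε : ℕ → ℝ≥0 := fun j => ((j : ℝ≥0) + 1)⁻¹
  have hε : ∀ j, (ε j : ℝ≥0∞) ≠ 0 := fun j => by simp [ε]
  have hε_small : ∀ r : ℝ≥0∞, 0 < r → ∃ j, (ε j : ℝ≥0∞) < r := fun r hr => by
    obtain ⟨j, hj⟩ := ENNReal.exists_inv_nat_lt hr.ne'
    refine ⟨j, lt_of_le_of_lt ?_ hj⟩
    rw [ENNReal.coe_inv (by positivity)]
    push_cast
    exact ENNReal.inv_le_inv.2 le_self_add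
  choose N hN using fun j => Metric.exists_maximal_isSeparated (ε j) (F j)ᶜ
  have hNF : ∀ j, N j ⊆ (F j)ᶜ := fun j => (hN j).prop.1
  have hNloc : ∀ j, IsLocallySubsingleton (N j) :=
    fun j => (hN j).prop.2.isLocallySubsingleton (hε j)
  refine ⟨⋃ j, N j, dense_iUnion_of_isCover hdense
    (fun j => Metric.IsCover.of_maximal_isSeparated (hN j)) hε_small, ⟨N, rfl, hNloc⟩, ?_⟩
  refine isGδ_of_isClosed_inter hclosed hcover fun n => ?_
  have hinter : (⋃ j, N j) ∩ F n = accumulate N n ∩ F n := by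
    refine (inter_subset_inter_left _ (accumulate_subset_iUnion n)).antisymm' ?_
    rintro x ⟨hx, hxF⟩
    obtain ⟨j, hj⟩ := mem_iUnion.1 hx
    exact ⟨mem_accumulate.2 ⟨j, le_of_not_gt fun hnj => hNF j hj (hmono hnj.le hxF), hj⟩, hxF⟩
  rw [hinter]
  exact (isClosed_accumulate (fun j => (hNloc j).isClosed) n).inter (hclosed n)

theorem stmt_2_general {X : Type*} [TopologicalSpace X] [TopologicalSpace.MetrizableSpace X]
    (hmeager : ∃ f : ℕ → Set X, (∀ n, IsNowhereDense (f n)) ∧ (⋃ n, f n) = Set.univ)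
    (hDH : ∀ A B : Set X, Dense A → SigmaDiscrete A → Dense B → SigmaDiscrete B →
      ∃ h : X ≃ₜ X, h '' A = B)
    (A : Set X) (hA : SigmaDiscrete A) : IsGδ A := by
  let _ : MetricSpace X := TopologicalSpace.metrizableSpaceMetric X
  obtain ⟨f, hf, hcover⟩ := hmeager
  obtain ⟨F, hmono, hclosed, hdense, hFcover⟩ :=
    exists_monotone_isClosed_cover_of_isNowhereDense hf hcover
  obtain ⟨E, hEd, hEσ, hEG⟩ := exists_dense_sigmaDiscrete_isGδ hmono hclosed hdense hFcover
  obtain ⟨h, hh⟩ := hDH E (E ∪ A) hEd hEσ (hEd.mono subset_union_left) (hEσ.union hA)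
  have hEA : IsGδ (E ∪ A) := by
    rw [← hh, h.image_eq_preimage_symm]
    exact hEG.preimage h.symm.continuous
  have hA_eq : (E ∪ A) \ (E \ A) = A := by
    ext x
    simp only [mem_sdiff, mem_union]
    tauto
  exact hA_eq ▸ hEA.diff_of_sigmaDiscrete (hEσ.mono sdiff_subset)

/-- Every densely homogeneous metrizable space of the first category is a `Λ`-set:
every σ-discrete subset is a `Gδ`-set in `X`. -/
theorem stmt_2 {X : Type*} [TopologicalSpace X] [TopologicalSpace.MetrizableSpace X]
    (hmeager : ∃ f : ℕ → Set X, (∀ n, IsNowhereDense (f n)) ∧ (⋃ n, f n) = Set.univ)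
    (hdense : ∃ A : Set X, Dense A ∧ SigmaDiscrete A)
    (hDH : ∀ A B : Set X, Dense A → SigmaDiscrete A → Dense B → SigmaDiscrete B →
      ∃ h : X ≃ₜ X, h '' A = B)
    (A : Set X) (hA : SigmaDiscrete A) : IsGδ A :=
  stmt_2_general hmeager hDH A hA
end

section
/- Let X be a topological space and let V be the union of all open subsets of X that are meager in X. Then V is an open subset of X that is of the first category in itself, and V contains every open subset of X that is of the first category in itself. -/
/-!
Banach category theorem: a union of open meagre sets is meagre. Take a maximal pairwise
disjoint family `𝒟` of open meagre sets. Enumerating a nowhere dense cover of each member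
and taking, for each index `n`, the union over `𝒟` of the `n`-th pieces gives nowhere dense
sets, because the members of `𝒟` are open and disjoint; so `⋃₀ 𝒟` is meagre. By maximality
every open meagre set lies in `closure (⋃₀ 𝒟)`, which exceeds `⋃₀ 𝒟` only by its frontier,
a nowhere dense set. Meagreness in an open subspace and in the whole space coincide, which
turns this into the statement about first category in itself.
-/

open Set Topology

/-- A subset `S` of a topological space `X` is meager in `X` if it is a countable union
of sets nowhere dense in `X`. -/
def MeagerIn {X : Type*} [TopologicalSpace X] (S : Set X) : Prop :=
  ∃ f : ℕ → Set X, (∀ n, IsNowhereDense (f n)) ∧ S = ⋃ n, f n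

/-- A subset `S` of `X` is of the first category in itself if the subspace `S` is a
countable union of sets nowhere dense in the subspace `S`. -/
def MeagerInItself {X : Type*} [TopologicalSpace X] (S : Set X) : Prop :=
  ∃ f : ℕ → Set ↥S, (∀ n, IsNowhereDense (f n)) ∧ (⋃ n, f n) = Set.univ

theorem Set.exists_maximal_pairwiseDisjoint_subset {ι β : Type*} [PartialOrder β] [OrderBot β]
    (s : Set ι) (f : ι → β) : ∃ t, Maximal (fun t => t ⊆ s ∧ t.PairwiseDisjoint f) t :=
  zorn_subset _ fun c hcS hc =>
    ⟨⋃₀ c, ⟨sUnion_subset fun _ ht => (hcS ht).1,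
      (hc.pairwiseDisjoint_sUnion f).mpr fun _ ht => (hcS ht).2⟩,
      fun _ => subset_sUnion_of_mem⟩

section Meagre

variable {X : Type*} [TopologicalSpace X]

theorem meagerIn_iff_isMeagre {s : Set X} : MeagerIn s ↔ IsMeagre s := by
  refine ⟨fun ⟨f, hf, hs⟩ => hs ▸ isMeagre_iUnion fun n => (hf n).isMeagre, fun h => ?_⟩
  obtain ⟨S, hS, hSc, hsS⟩ := isMeagre_iff_countable_union_isNowhereDense.mp h
  -- `∅` is added so that the family is nonempty and can be enumerated by `ℕ`
  obtain ⟨f, hf⟩ := (hSc.insert ∅).exists_eq_range (insert_nonempty _ _)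
  have hfS : ∀ n, IsNowhereDense (f n) := by
    intro n
    rcases (hf ▸ mem_range_self n : f n ∈ insert ∅ S) with hn | hn
    · exact hn ▸ isNowhereDense_empty
    · exact hS _ hn
  refine ⟨fun n => f n ∩ s, fun n => (hfS n).mono inter_subset_left, ?_⟩
  rw [← iUnion_inter, ← sUnion_range, ← hf, sUnion_insert, empty_union,
    inter_eq_right.mpr hsS]

theorem IsOpen.meagerInItself_iff_isMeagre {s : Set X} (hs : IsOpen s) :
    MeagerInItself s ↔ IsMeagre s := by
  have hself : MeagerInItself s ↔ IsMeagre (univ : Set s) := by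
    rw [← meagerIn_iff_isMeagre, MeagerIn, MeagerInItself]
    simp only [eq_comm]
  refine hself.trans ⟨fun h => by simpa using h.image_val, fun h => ?_⟩
  simpa using h.preimage_of_isOpenMap continuous_subtype_val hs.isOpenMap_subtype_val

theorem IsOpen.isNowhereDense_frontier {s : Set X} (hs : IsOpen s) :
    IsNowhereDense (frontier s) := by
  rw [isClosed_frontier.isNowhereDense_iff, ← frontier_compl]
  exact interior_frontier hs.isClosed_compl

theorem isNowhereDense_biUnion_of_pairwiseDisjoint {ι : Type*} {s : Set ι} {W N : ι → Set X}
    (hW : ∀ i ∈ s, IsOpen (W i)) (hd : s.PairwiseDisjoint W) (hNW : ∀ i ∈ s, N i ⊆ W i)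
    (hN : ∀ i ∈ s, IsNowhereDense (N i)) : IsNowhereDense (⋃ i ∈ s, N i) := by
  set O := interior (closure (⋃ i ∈ s, N i))
  have hOW : ∀ i ∈ s, Disjoint O (W i) := by
    intro i hi
    have hpiece : (⋃ j ∈ s, N j) ∩ W i ⊆ N i := by
      rintro x ⟨hx, hxW⟩
      obtain ⟨j, hj, hxj⟩ := mem_iUnion₂.mp hx
      obtain rfl | hji := eq_or_ne j i
      · exact hxj
      · exact absurd (hd hj hi hji) (not_disjoint_iff.mpr ⟨x, hNW j hj hxj, hxW⟩)
    have hOW_sub : O ∩ W i ⊆ closure (N i) := calc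
      O ∩ W i ⊆ closure (⋃ j ∈ s, N j) ∩ W i := inter_subset_inter_left _ interior_subset
      _ ⊆ closure ((⋃ j ∈ s, N j) ∩ W i) := (hW i hi).closure_inter
      _ ⊆ closure (N i) := closure_mono hpiece
    rw [disjoint_iff_inter_eq_empty, ← subset_empty_iff, ← hN i hi]
    exact interior_maximal hOW_sub (isOpen_interior.inter (hW i hi))
  have hOcl : Disjoint O (closure (⋃ i ∈ s, W i)) :=
    (disjoint_iUnion₂_right.mpr hOW).closure_right isOpen_interior
  exact hOcl.eq_bot_of_le <| interior_subset.trans <|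
    closure_mono <| iUnion₂_mono fun i hi => hNW i hi

theorem isMeagre_sUnion_of_pairwiseDisjoint {𝒟 : Set (Set X)} (hopen : ∀ W ∈ 𝒟, IsOpen W)
    (hd : 𝒟.PairwiseDisjoint id) (hm : ∀ W ∈ 𝒟, IsMeagre W) : IsMeagre (⋃₀ 𝒟) := by
  choose! f hf hfW using fun W hW => meagerIn_iff_isMeagre.mpr (hm W hW)
  have hpieces : ∀ n, IsNowhereDense (⋃ W ∈ 𝒟, f W n) := fun n =>
    isNowhereDense_biUnion_of_pairwiseDisjoint (W := id) hopen hd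
      (fun W hW => (subset_iUnion (f W) n).trans (hfW W hW).ge) (fun W hW => hf W hW n)
  refine (isMeagre_iUnion fun n => (hpieces n).isMeagre).mono ?_
  rintro x ⟨W, hW, hxW⟩
  rw [hfW W hW] at hxW
  obtain ⟨n, hn⟩ := mem_iUnion.mp hxW
  exact mem_iUnion.mpr ⟨n, mem_iUnion₂.mpr ⟨W, hW, hn⟩⟩

theorem isMeagre_sUnion_of_isOpen {𝒰 : Set (Set X)} (h : ∀ U ∈ 𝒰, IsOpen U ∧ IsMeagre U) :
    IsMeagre (⋃₀ 𝒰) := by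
  obtain ⟨𝒟, ⟨h𝒟, hd⟩, hmax⟩ :=
    exists_maximal_pairwiseDisjoint_subset {W : Set X | IsOpen W ∧ IsMeagre W} id
  have hD : IsOpen (⋃₀ 𝒟) := isOpen_sUnion fun W hW => (h𝒟 hW).1
  have hcover : ⋃₀ 𝒰 ⊆ closure (⋃₀ 𝒟) := by
    rintro x ⟨U, hU, hxU⟩
    by_contra hx
    have hdisj : ∀ W ∈ 𝒟, U \ closure (⋃₀ 𝒟) ≠ W → Disjoint (U \ closure (⋃₀ 𝒟)) W :=
      fun W hW _ => disjoint_left.mpr fun y hy hyW => hy.2 (subset_closure ⟨W, hW, hyW⟩)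
    have hnew : U \ closure (⋃₀ 𝒟) ∈ 𝒟 :=
      hmax ⟨insert_subset ⟨(h U hU).1.sdiff isClosed_closure, (h U hU).2.mono sdiff_subset⟩ h𝒟,
        hd.insert hdisj⟩ (subset_insert _ _) (mem_insert _ _)
    exact hx (subset_closure ⟨_, hnew, hxU, hx⟩)
  rw [closure_eq_self_union_frontier] at hcover
  exact ((isMeagre_sUnion_of_pairwiseDisjoint (fun W hW => (h𝒟 hW).1) hd
    fun W hW => (h𝒟 hW).2).union hD.isNowhereDense_frontier.isMeagre).mono hcover

end Meagre

/-- Let `V` be the union of all open subsets of `X` that are meager in `X`. Then `V` is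
open, `V` is of the first category in itself, and `V` contains every open subset of `X`
that is of the first category in itself. -/
theorem stmt_5 {X : Type*} [TopologicalSpace X]
    (V : Set X) (hV : V = ⋃₀ {U : Set X | IsOpen U ∧ MeagerIn U}) :
    IsOpen V ∧ MeagerInItself V ∧
      ∀ U : Set X, IsOpen U → MeagerInItself U → U ⊆ V := by
  have hVopen : IsOpen V := hV ▸ isOpen_sUnion fun U hU => hU.1
  have hVmeagre : IsMeagre V :=
    hV ▸ isMeagre_sUnion_of_isOpen fun U hU => ⟨hU.1, meagerIn_iff_isMeagre.mp hU.2⟩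
  refine ⟨hVopen, hVopen.meagerInItself_iff_isMeagre.mpr hVmeagre, fun U hU hUm => ?_⟩
  rw [hV]
  exact subset_sUnion_of_mem
    ⟨hU, meagerIn_iff_isMeagre.mpr (hU.meagerInItself_iff_isMeagre.mp hUm)⟩
end

section
/- No densely homogeneous metrizable space without isolated points is itself σ-discrete; that is, if X is a metrizable space without isolated points that has a dense σ-discrete subset and for any two σ-discrete dense subsets A, B of X there is a self-homeomorphism of X mapping A onto B, then X cannot be written as a countable union of sets each of which is discrete in X. -/
open Set Topology

theorem SigmaDiscrete.mono_s12 {X : Type*} [TopologicalSpace X] {A B : Set X} (hAB : A ⊆ B)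
    (hB : SigmaDiscrete B) : SigmaDiscrete A := by
  obtain ⟨f, rfl, hf⟩ := hB
  refine ⟨fun n => f n ∩ A, ?_, fun n x => ?_⟩
  · rw [← iUnion_inter, inter_eq_right.2 hAB]
  · obtain ⟨U, hU, hUf⟩ := hf n x
    exact ⟨U, hU, hUf.anti (inter_subset_inter_right U inter_subset_left)⟩

theorem stmt_12_general {X : Type*} [TopologicalSpace X]
    [Nonempty X]
    (hni : ∀ x : X, ¬ IsOpen ({x} : Set X))
    (hDH : ∀ A B : Set X, Dense A → SigmaDiscrete A → Dense B → SigmaDiscrete B →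
      ∃ h : X ≃ₜ X, h '' A = B) :
    ¬ SigmaDiscrete (Set.univ : Set X) := by
  intro hX
  obtain ⟨x₀⟩ := ‹Nonempty X›
  obtain ⟨h, hh⟩ := hDH {x₀}ᶜ univ (dense_compl_singleton_iff_not_open.2 (hni x₀))
    (hX.mono_s12 (subset_univ _)) dense_univ hX
  have hx₀ : h x₀ ∈ h '' {x₀}ᶜ := hh ▸ mem_univ _
  exact h.injective.mem_set_image.1 hx₀ rfl

/-- No densely homogeneous metrizable space without isolated points is itself
σ-discrete: if `X` is a (nonempty) metrizable space without isolated points which has a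
dense σ-discrete subset and such that any two σ-discrete dense subsets are mapped onto
each other by a self-homeomorphism, then `X` is not a countable union of sets each
discrete in `X`. -/
theorem stmt_12 {X : Type*} [TopologicalSpace X] [TopologicalSpace.MetrizableSpace X]
    [Nonempty X]
    (hni : ∀ x : X, ¬ IsOpen ({x} : Set X))
    (hdense : ∃ A : Set X, Dense A ∧ SigmaDiscrete A)
    (hDH : ∀ A B : Set X, Dense A → SigmaDiscrete A → Dense B → SigmaDiscrete B →
      ∃ h : X ≃ₜ X, h '' A = B) :
    ¬ SigmaDiscrete (Set.univ : Set X) :=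
  stmt_12_general hni hDH
end
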